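/- First-derivative consequence of Sylvester's identity (coefficient of a_{n+1,n+1}·a_{i,n+1} in the inductive step): Let R be a commutative ring, n ≥ 0, A an (n+2)×(n+2) matrix over R, v : Fin (n+2) → R, and r an index in Fin (n+2) with 2 ≤ r (i.e., r is distinct from 0 and 1). Set B = A.updateRow r v. Then det(B) · det(A_{0,1|0,1}) + det(A) · det(B_{0,1|0,1}) = det(B_{0|0}) · det(A_{1|1}) + det(A_{0|0}) · det(B_{1|1}) − det(B_{0|1}) · det(A_{1|0}) − det(A_{0|1}) · det(B_{1|0}). -/

import Mathlib

/-!
Every minor in the identity keeps row `r`, so each is additive in that row. Write the row `v` of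
`B` as `A r + (v - A r)` and put `D = A.updateRow r (v - A r)`. The Desnanot–Jacobi identity
`det M * det M_{01|01} = det M_{0|0} * det M_{1|1} - det M_{0|1} * det M_{1|0}`, applied to `B`
and expanded, has its terms that are quadratic in `A` or in `D` cancelled by the same identity
for `A` and for `D`; the mixed terms that remain are the claim.

Desnanot–Jacobi itself: if `C` is the identity with columns `0`, `1` replaced by columns `0`, `1`
of `adj A`, then `A * C` is `A` with those columns replaced by `det A • e₀`, `det A • e₁`, so
`det A * det C = det A ^ 2 * det A_{01|01}` while `det C` is the `2 × 2` minor of `adj A`.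
Cancelling `det A` is legitimate for the generic matrix over `ℤ[X_ij]`, and the identity
specialises to any `A`.
-/

open Function

theorem Fin.succAbove_one_comp_succAbove_zero {n : ℕ} :
    (1 : Fin (n + 2)).succAbove ∘ (0 : Fin (n + 1)).succAbove = fun p : Fin n => p.succ.succ := by
  ext p
  simp [Fin.succAbove, Fin.lt_def]

namespace Matrix

variable {R : Type*} [CommRing R]

theorem submatrix_updateCol_of_injective {l m n o α : Type*} [DecidableEq n] [DecidableEq o]
    (A : Matrix m n α) (f : l → m) {g : o → n} (hg : Injective g) (j : o) (c : m → α) :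
    (A.updateCol (g j) c).submatrix f g = (A.submatrix f g).updateCol j (c ∘ f) := by
  ext p q
  obtain rfl | hq := eq_or_ne q j
  · simp
  · simp [hq, hg.ne hq]

theorem submatrix_updateRow_of_injective {l m n o α : Type*} [DecidableEq m] [DecidableEq l]
    (A : Matrix m n α) {f : l → m} (hf : Injective f) (g : o → n) (i : l) (v : n → α) :
    (A.updateRow (f i) v).submatrix f g = (A.submatrix f g).updateRow i (v ∘ g) := by
  ext p q
  obtain rfl | hp := eq_or_ne p i
  · simp
  · simp [hp, hf.ne hp]

theorem det_updateCol_single {n : ℕ} (M : Matrix (Fin (n + 1)) (Fin (n + 1)) R)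
    (i j : Fin (n + 1)) (c : R) :
    (M.updateCol j (Pi.single i c)).det
      = (-1) ^ (i + j : ℕ) * c * (M.submatrix i.succAbove j.succAbove).det := by
  rw [det_succ_column _ j, Fintype.sum_eq_single i fun k hk => by simp [hk]]
  simp

theorem det_one_updateCol_zero_updateCol_one {n : ℕ} (u w : Fin (n + 2) → R) :
    (((1 : Matrix (Fin (n + 2)) (Fin (n + 2)) R).updateCol 0 u).updateCol 1 w).det
      = u 0 * w 1 - w 0 * u 1 := by
  set C := ((1 : Matrix (Fin (n + 2)) (Fin (n + 2)) R).updateCol 0 u).updateCol 1 w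
  have h₀ : C.submatrix Fin.succ (0 : Fin (n + 2)).succAbove =
      (1 : Matrix (Fin (n + 1)) (Fin (n + 1)) R).updateCol 0 (w ∘ Fin.succ) := by
    ext i j
    cases j using Fin.cases <;> simp [C, one_apply, Fin.ext_iff]
  have h₁ : C.submatrix Fin.succ (1 : Fin (n + 2)).succAbove =
      (1 : Matrix (Fin (n + 1)) (Fin (n + 1)) R).updateCol 0 (u ∘ Fin.succ) := by
    ext i j
    cases j using Fin.cases <;> simp [C, one_apply, Fin.ext_iff, Fin.succAbove]
  rw [det_succ_row_zero, Fin.sum_univ_succ, Fin.sum_univ_succ, Fin.succ_zero_eq_one, h₀, h₁,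
    ← cramer_apply, ← cramer_apply, cramer_one]
  simp [C, Fin.ext_iff]
  ring

theorem det_updateCol_single_zero_updateCol_single_one {n : ℕ}
    (M : Matrix (Fin (n + 2)) (Fin (n + 2)) R) (a b : R) :
    ((M.updateCol 0 (Pi.single 0 a)).updateCol 1 (Pi.single 1 b)).det
      = a * b *
        (M.submatrix (fun p : Fin n => p.succ.succ) (fun q : Fin n => q.succ.succ)).det := by
  have h₁₀ : (1 : Fin (n + 2)).succAbove 0 = 0 := rfl
  have hsingle : Pi.single ((1 : Fin (n + 2)).succAbove 0) a ∘ (1 : Fin (n + 2)).succAbove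
      = Pi.single 0 a := by
    ext p
    simp only [Function.comp_apply, Pi.single_apply, Fin.succAbove_right_injective.eq_iff]
  rw [det_updateCol_single, ← h₁₀,
    submatrix_updateCol_of_injective _ _ Fin.succAbove_right_injective, hsingle,
    det_updateCol_single, submatrix_submatrix, Fin.succAbove_one_comp_succAbove_zero]
  simp
  ring

theorem det_mul_det_mul_det_submatrix_succ_succ {n : ℕ}
    (A : Matrix (Fin (n + 2)) (Fin (n + 2)) R) :
    A.det * (A.det *
        (A.submatrix (fun p : Fin n => p.succ.succ) (fun q : Fin n => q.succ.succ)).det)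
      = A.det * ((A.submatrix (0 : Fin (n + 2)).succAbove (0 : Fin (n + 2)).succAbove).det *
          (A.submatrix (1 : Fin (n + 2)).succAbove (1 : Fin (n + 2)).succAbove).det
        - (A.submatrix (0 : Fin (n + 2)).succAbove (1 : Fin (n + 2)).succAbove).det *
          (A.submatrix (1 : Fin (n + 2)).succAbove (0 : Fin (n + 2)).succAbove).det) := by
  -- `A.cramer (Pi.single j 1)` is column `j` of `adjugate A`.
  set C := ((1 : Matrix (Fin (n + 2)) (Fin (n + 2)) R).updateCol 0
    (A.cramer (Pi.single 0 1))).updateCol 1 (A.cramer (Pi.single 1 1))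
  have hAC : A * C = (A.updateCol 0 (Pi.single 0 A.det)).updateCol 1 (Pi.single 1 A.det) := by
    simp [C, mul_updateCol, mulVec_cramer, ← Pi.single_smul']
  have hC : C.det = (A.submatrix (0 : Fin (n + 2)).succAbove (0 : Fin (n + 2)).succAbove).det *
          (A.submatrix (1 : Fin (n + 2)).succAbove (1 : Fin (n + 2)).succAbove).det
        - (A.submatrix (0 : Fin (n + 2)).succAbove (1 : Fin (n + 2)).succAbove).det *
          (A.submatrix (1 : Fin (n + 2)).succAbove (0 : Fin (n + 2)).succAbove).det := by
    simp only [C, det_one_updateCol_zero_updateCol_one, cramer_apply, det_updateCol_single]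
    norm_num
    ring
  rw [← hC, ← det_mul, hAC, det_updateCol_single_zero_updateCol_single_one, mul_assoc]

theorem det_mul_det_submatrix_succ_succ {n : ℕ} (A : Matrix (Fin (n + 2)) (Fin (n + 2)) R) :
    A.det * (A.submatrix (fun p : Fin n => p.succ.succ) (fun q : Fin n => q.succ.succ)).det
      = (A.submatrix (0 : Fin (n + 2)).succAbove (0 : Fin (n + 2)).succAbove).det *
          (A.submatrix (1 : Fin (n + 2)).succAbove (1 : Fin (n + 2)).succAbove).det
        - (A.submatrix (0 : Fin (n + 2)).succAbove (1 : Fin (n + 2)).succAbove).det *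
          (A.submatrix (1 : Fin (n + 2)).succAbove (0 : Fin (n + 2)).succAbove).det := by
  let X := mvPolynomialX (Fin (n + 2)) (Fin (n + 2)) ℤ
  have hX := mul_left_cancel₀ (det_mvPolynomialX_ne_zero (Fin (n + 2)) ℤ)
    (det_mul_det_mul_det_submatrix_succ_succ X)
  have hA := mvPolynomialX_mapMatrix_aeval ℤ A
  rw [AlgHom.mapMatrix_apply] at hA
  have := congrArg (MvPolynomial.aeval fun p => A p.1 p.2) hX
  simpa only [_root_.map_mul, map_sub, AlgHom.map_det, AlgHom.mapMatrix_apply,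
    ← submatrix_map, X, hA] using this

theorem det_submatrix_updateRow_add {m n o : Type*} [DecidableEq m] [Fintype o] [DecidableEq o]
    (A : Matrix m n R) {f : o → m} (hf : Injective f) (g : o → n) (i : o) (u v : n → R) :
    ((A.updateRow (f i) (u + v)).submatrix f g).det
      = ((A.updateRow (f i) u).submatrix f g).det + ((A.updateRow (f i) v).submatrix f g).det := by
  simp only [submatrix_updateRow_of_injective A hf]
  exact det_updateRow_add _ _ _ _

theorem det_submatrix_updateRow_eq_add {m n o : Type*} [DecidableEq m] [Fintype o] [DecidableEq o]
    (A : Matrix m n R) {f : o → m} (hf : Injective f) (g : o → n) {i : o} {r : m} (h : f i = r)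
    (v : n → R) :
    ((A.updateRow r v).submatrix f g).det
      = (A.submatrix f g).det + ((A.updateRow r (v - A r)).submatrix f g).det := by
  subst h
  conv_lhs => rw [← add_sub_cancel (A (f i)) v]
  rw [det_submatrix_updateRow_add A hf, updateRow_eq_self]

end Matrix

open Matrix

/-- First-derivative consequence of Sylvester's identity: for `B = A.updateRow r v`
with `r` distinct from `0` and `1` (i.e. `2 ≤ r`),
`det B * det A_{0,1|0,1} + det A * det B_{0,1|0,1}
  = det B_{0|0} * det A_{1|1} + det A_{0|0} * det B_{1|1}
    - det B_{0|1} * det A_{1|0} - det A_{0|1} * det B_{1|0}`. -/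
theorem sylvester_first_derivative {R : Type*} [CommRing R] (n : ℕ)
    (A : Matrix (Fin (n + 2)) (Fin (n + 2)) R) (v : Fin (n + 2) → R)
    (r : Fin (n + 2)) (hr : 2 ≤ r.val) :
    (A.updateRow r v).det *
        (A.submatrix (fun p : Fin n => p.succ.succ) (fun q : Fin n => q.succ.succ)).det
      + A.det *
        ((A.updateRow r v).submatrix
          (fun p : Fin n => p.succ.succ) (fun q : Fin n => q.succ.succ)).det
    = ((A.updateRow r v).submatrix (0 : Fin (n + 2)).succAbove (0 : Fin (n + 2)).succAbove).det *
        (A.submatrix (1 : Fin (n + 2)).succAbove (1 : Fin (n + 2)).succAbove).det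
      + (A.submatrix (0 : Fin (n + 2)).succAbove (0 : Fin (n + 2)).succAbove).det *
        ((A.updateRow r v).submatrix
          (1 : Fin (n + 2)).succAbove (1 : Fin (n + 2)).succAbove).det
      - ((A.updateRow r v).submatrix
          (0 : Fin (n + 2)).succAbove (1 : Fin (n + 2)).succAbove).det *
        (A.submatrix (1 : Fin (n + 2)).succAbove (0 : Fin (n + 2)).succAbove).det
      - (A.submatrix (0 : Fin (n + 2)).succAbove (1 : Fin (n + 2)).succAbove).det *
        ((A.updateRow r v).submatrix
          (1 : Fin (n + 2)).succAbove (0 : Fin (n + 2)).succAbove).det := by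
  obtain ⟨r₀, hr₀⟩ := Fin.exists_succAbove_eq (x := r) (y := 0) (by rintro rfl; simp at hr)
  obtain ⟨r₁, hr₁⟩ := Fin.exists_succAbove_eq (x := r) (y := 1) (by rintro rfl; simp at hr)
  have hr₂ : (fun p : Fin n => p.succ.succ) ⟨r - 2, by omega⟩ = r := by ext; simp; omega
  have hsucc₂ : Injective (fun p : Fin n => p.succ.succ) :=
    (Fin.succ_injective _).comp (Fin.succ_injective _)
  have hdet : (A.updateRow r v).det = A.det + (A.updateRow r (v - A r)).det := by
    simpa using det_submatrix_updateRow_eq_add A injective_id id rfl v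
  have hB := det_mul_det_submatrix_succ_succ (A.updateRow r v)
  rw [hdet, det_submatrix_updateRow_eq_add A Fin.succAbove_right_injective _ hr₀ v,
    det_submatrix_updateRow_eq_add A Fin.succAbove_right_injective _ hr₀ v,
    det_submatrix_updateRow_eq_add A Fin.succAbove_right_injective _ hr₁ v,
    det_submatrix_updateRow_eq_add A Fin.succAbove_right_injective _ hr₁ v,
    det_submatrix_updateRow_eq_add A hsucc₂ _ hr₂ v] at hB ⊢
  linear_combination hB + det_mul_det_submatrix_succ_succ A
    - det_mul_det_submatrix_succ_succ (A.updateRow r (v - A r))
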